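/- Let F : (ℕ^n)^M → ℝ≥0 be monotone and submodular over the integer lattice ℕ^{M×n}. Then for any two joint allocations b, b* ∈ (ℕ^n)^M, F(b* ∨ b) − F(b) ≤ Σ_{i=1}^M [F(b*^i ∨ b^i, b^{−i}) − F(b^i, b^{−i})], where ∨ is coordinatewise maximum and (x, b^{−i}) denotes the allocation obtained from b by replacing the i-th component with x ∈ ℕ^n. -/

import Mathlib

/-!
Raise the coordinates of `b` to those of `b* ∨ b` one player at a time. The gain of raising
player `i` on top of the players already raised is, by submodularity (the meet of the two
allocations is `b`), at most the gain of raising `i` alone at `b`; the left side telescopes.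
-/

open Finset Function

def IsSubmodular {β G : Type*} [Lattice β] [Add G] [LE G] (F : β → G) : Prop :=
  ∀ x y, F (x ⊔ y) + F (x ⊓ y) ≤ F x + F y

theorem IsSubmodular.sub_le_sub {β G : Type*} [Lattice β] [AddCommGroup G] [PartialOrder G]
    [IsOrderedAddMonoid G] {F : β → G} (hF : IsSubmodular F) (x y : β) :
    F (x ⊔ y) - F x ≤ F y - F (x ⊓ y) := by
  rw [sub_le_sub_iff]
  simpa only [add_comm] using hF x y

section Piecewise

variable {ι α : Type*} [DecidableEq ι] [Lattice α] {b x : ι → α}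

theorem Finset.piecewise_sup_update (hbx : b ≤ x) (s : Finset ι) (i : ι) :
    s.piecewise x b ⊔ update b i (x i) = (insert i s).piecewise x b := by
  ext j
  by_cases hji : j = i
  · subst hji
    simpa using s.piecewise_le_of_le_of_le le_rfl hbx j
  · by_cases hjs : j ∈ s <;> simp [hji, hjs, hbx j]

theorem Finset.piecewise_inf_update (hbx : b ≤ x) {s : Finset ι} {i : ι} (hi : i ∉ s) :
    s.piecewise x b ⊓ update b i (x i) = b := by
  ext j
  by_cases hji : j = i
  · subst hji
    simp [hi, hbx j]
  · by_cases hjs : j ∈ s <;> simp [hji, hjs, hbx j]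

end Piecewise

theorem IsSubmodular.sub_le_sum_update_sub {ι α G : Type*} [DecidableEq ι] [Lattice α]
    [AddCommGroup G] [PartialOrder G] [IsOrderedAddMonoid G] {F : (ι → α) → G}
    (hF : IsSubmodular F) {b x : ι → α} (hbx : b ≤ x) (s : Finset ι) :
    F (s.piecewise x b) - F b ≤ ∑ i ∈ s, (F (update b i (x i)) - F b) := by
  induction s using Finset.induction_on with
  | empty => simp
  | insert i s hi ih =>
    have hstep := hF.sub_le_sub (s.piecewise x b) (update b i (x i))
    rw [piecewise_sup_update hbx, piecewise_inf_update hbx hi] at hstep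
    rw [sum_insert hi]
    calc F ((insert i s).piecewise x b) - F b
        = (F ((insert i s).piecewise x b) - F (s.piecewise x b)) +
            (F (s.piecewise x b) - F b) := by abel
      _ ≤ _ := add_le_add hstep ih

open Finset in
theorem submodular_telescoping_bound_general {M n : ℕ}
    (F : (Fin M → Fin n → ℕ) → ℝ)
    (hF_submod : ∀ x y : Fin M → Fin n → ℕ, F (x ⊔ y) + F (x ⊓ y) ≤ F x + F y)
    (b bstar : Fin M → Fin n → ℕ) :
    F (bstar ⊔ b) - F b ≤
      ∑ i, (F (Function.update b i (bstar i ⊔ b i)) - F b) := by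
  have h := IsSubmodular.sub_le_sum_update_sub hF_submod (le_sup_right : b ≤ bstar ⊔ b) univ
  rwa [piecewise_univ] at h

open Finset in
/-- For a monotone submodular social function `F` on the integer lattice
`ℕ^{M×n}`, the gap `F(b* ∨ b) − F(b)` is at most the sum of the per-player gaps
`F(b*^i ∨ b^i, b^{−i}) − F(b^i, b^{−i})`. -/
theorem submodular_telescoping_bound {M n : ℕ}
    (F : (Fin M → Fin n → ℕ) → ℝ)
    (hF_nonneg : ∀ b, 0 ≤ F b)
    (hF_mono : Monotone F)
    (hF_submod : ∀ x y : Fin M → Fin n → ℕ, F (x ⊔ y) + F (x ⊓ y) ≤ F x + F y)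
    (b bstar : Fin M → Fin n → ℕ) :
    F (bstar ⊔ b) - F b ≤
      ∑ i, (F (Function.update b i (bstar i ⊔ b i)) - F b) :=
  submodular_telescoping_bound_general F hF_submod b bstar
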